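/- Let f : C → C be a geodesic-preserving bijection of the flat cylinder C. Then there exist σ ∈ {1, -1} and real numbers x₀, α, a, b with a ≠ 0 such that f(π(x, y)) = π(σ·x + α·y + x₀, a·y + b) for all x, y ∈ ℝ. (Equivalently, f is the composition of an isometry of the cylinder, an affine map in the ℝ-coordinate, and a twisting map.) -/

import Mathlib

/-- The flat cylinder `C = (ℝ/ℤ) × ℝ`. -/
abbrev Cyl : Type := AddCircle (1 : ℝ) × ℝ

/-- The quotient map `π : ℝ × ℝ → C`, `π(x, y) = (↑x, y)`. -/
noncomputable def cylπ (p : ℝ × ℝ) : Cyl := ((p.1 : AddCircle (1 : ℝ)), p.2)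

/-- An affine line in `ℝ²`. -/
def IsLine (L : Set (ℝ × ℝ)) : Prop :=
  ∃ p v : ℝ × ℝ, v ≠ 0 ∧ L = {x | ∃ t : ℝ, x = p + t • v}

/-- A geodesic of the flat cylinder is the image under `π` of an affine line. -/
def IsCylGeodesic (G : Set Cyl) : Prop :=
  ∃ L : Set (ℝ × ℝ), IsLine L ∧ G = cylπ '' L

/-!
Two distinct non-horizontal geodesics meet in no point or in at least two, while a horizontal
circle meets each of them exactly once. Hence `f` maps horizontal circles to horizontal circles,
acting on heights by an injection `g`, and non-horizontal geodesics to non-horizontal ones.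
After composing with a shear-translation we may assume that `f` fixes `0` and the vertical
through it; the same incidence arguments then show that `f` maps verticals to verticals and the
helix `y = m x + c` to a helix whose slope `μ m` does not depend on `c`. Thus
`f (x, y) = (ψ x, g y)` with `ψ x ≡ (g (m x + c) - g c) / μ m` modulo `1` for all `m ≠ 0` and
`c`. The defect `g (x + c) - g x - g c` lies in `μ m ℤ` for uncountably many distinct values
`μ m`, so `g` is additive; then `x ↦ g (m x) / μ m - g x / μ 1` is additive and integer-valued,
hence zero, which makes `g / g 1` a ring endomorphism of `ℝ`, i.e. the identity. Finally `ψ` is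
multiplication by an integer, which must be `±1` for `ψ` to be injective.
-/

open Set Function

namespace Cyl

local notation "𝕋" => AddCircle (1 : ℝ)

lemma coe_eq_zero_iff_exists_int {x : ℝ} : (x : 𝕋) = 0 ↔ ∃ k : ℤ, x = k := by
  rw [AddCircle.coe_eq_zero_iff]
  simp [eq_comm]

lemma coe_eq_coe_iff_exists_int {x y : ℝ} : (x : 𝕋) = y ↔ ∃ k : ℤ, y = x + k := by
  rw [← sub_eq_zero, ← AddCircle.coe_sub, coe_eq_zero_iff_exists_int]
  constructor <;> rintro ⟨k, hk⟩ <;> exact ⟨-k, by push_cast; linarith⟩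

lemma coe_half_ne_zero : ((1 / 2 : ℝ) : 𝕋) ≠ 0 := by
  rw [Ne, coe_eq_zero_iff_exists_int]
  rintro ⟨k, hk⟩
  have : (2 * k : ℤ) = 1 := by exact_mod_cast (by linarith : (2 : ℝ) * k = 1)
  omega

lemma _root_.AddMonoidHom.eq_zero_of_forall_coe_eq_zero {E : Type*} [AddCommGroup E]
    [Module ℚ E] (φ : E →+ ℝ) (h : ∀ x, (φ x : 𝕋) = 0) : φ = 0 := by
  ext x
  obtain ⟨k, hk⟩ := coe_eq_zero_iff_exists_int.1 (h x)
  set n : ℕ := k.natAbs + 1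
  obtain ⟨j, hj⟩ := coe_eq_zero_iff_exists_int.1 (h ((n : ℚ)⁻¹ • x))
  have hx : φ x = n * φ ((n : ℚ)⁻¹ • x) := by
    rw [← nsmul_eq_mul, ← map_nsmul, ← Nat.cast_smul_eq_nsmul ℚ, smul_smul,
      mul_inv_cancel₀ (by positivity), one_smul]
  rw [hk, hj] at hx
  have hkj : k = n * j := by exact_mod_cast hx
  have habs : k.natAbs = n * j.natAbs := by rw [hkj, Int.natAbs_mul, Int.natAbs_natCast]
  have hj0 : j.natAbs = 0 := by
    by_contra hne
    have : n ≤ n * j.natAbs := Nat.le_mul_of_pos_right n (Nat.pos_of_ne_zero hne)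
    have hn : n = k.natAbs + 1 := rfl
    omega
  simp [hk, hkj, Int.natAbs_eq_zero.1 hj0]

lemma eq_zero_of_forall_coe_div_eq_zero {μ : ℝ → ℝ} (hμ : Injective μ) {D : ℝ}
    (h : ∀ m ≠ 0, ((D / μ m : ℝ) : 𝕋) = 0) : D = 0 := by
  by_contra hD
  have hsub : {0}ᶜ ⊆ μ ⁻¹' range (fun k : ℤ => D / k) := fun m hm => by
    obtain ⟨k, hk⟩ := coe_eq_zero_iff_exists_int.1 (h m hm)
    exact ⟨k, show D / k = μ m by rw [← hk, div_div_cancel₀ hD]⟩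
  refine Cardinal.not_countable_real ?_
  rw [← union_compl_self {(0 : ℝ)}]
  exact (countable_singleton 0).union (((countable_range _).preimage hμ).mono hsub)

lemma eq_mul_of_map_add_of_map_mul {g : ℝ → ℝ} (hadd : ∀ x y, g (x + y) = g x + g y)
    (hmul : ∀ x y, g (x * y) * g 1 = g x * g y) (x : ℝ) : g x = g 1 * x := by
  rcases eq_or_ne (g 1) 0 with h1 | h1
  · have := hmul x x
    rw [h1, mul_zero, eq_comm, mul_self_eq_zero] at this
    rw [this, h1, zero_mul]
  · let φ : ℝ →+* ℝ :=
      { toFun := fun x => g x / g 1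
        map_one' := div_self h1
        map_mul' := fun x y => by field_simp; rw [hmul]
        map_zero' := by rw [show g 0 = 0 by simpa using hadd 0 0, zero_div]
        map_add' := fun x y => by rw [hadd, add_div] }
    have := RingHom.congr_fun (Subsingleton.elim φ (RingHom.id ℝ)) x
    simp only [RingHom.coe_mk, MonoidHom.coe_mk, OneHom.coe_mk, RingHom.id_apply, φ] at this
    field_simp at this
    linarith

theorem eq_mul_of_forall_coe_div {ψ : 𝕋 → 𝕋} {g μ : ℝ → ℝ} (hg0 : g 0 = 0)
    (hμ : Injective μ) (hμ0 : μ 0 = 0)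
    (h : ∀ m ≠ 0, ∀ c t : ℝ, ψ t = ↑((g (m * t + c) - g c) / μ m)) (y : ℝ) :
    g y = g 1 * y := by
  have hψ : ∀ m ≠ 0, ∀ t : ℝ, ψ t = ↑(g (m * t) / μ m) := fun m hm t => by
    simpa [hg0] using h m hm 0 t
  have hψ₁ : ∀ t : ℝ, ψ t = ↑(g t / μ 1) := fun t => by simpa using hψ 1 one_ne_zero t
  have hadd : ∀ t c, g (t + c) = g t + g c := by
    intro t c
    suffices g (t + c) - g t - g c = 0 by linarith
    refine eq_zero_of_forall_coe_div_eq_zero hμ fun m hm => ?_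
    have e₁ := h m hm c (t / m)
    have e₂ := hψ m hm (t / m)
    rw [mul_div_cancel₀ t hm] at e₁ e₂
    rw [show (g (t + c) - g t - g c) / μ m = (g (t + c) - g c) / μ m - g t / μ m by ring,
      AddCircle.coe_sub, ← e₁, ← e₂, sub_self]
  -- `g (m t) / μ m - g t / μ 1` is additive in `t` and integer-valued
  have hmul : ∀ m t, g (m * t) = μ m / μ 1 * g t := by
    intro m t
    rcases eq_or_ne m 0 with rfl | hm
    · simp [hg0, hμ0]
    let φ : ℝ →+ ℝ := AddMonoidHom.mk' (fun t => g (m * t) / μ m - g t / μ 1) fun s t => by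
      simp only [mul_add, hadd]
      ring
    have hφ := φ.eq_zero_of_forall_coe_eq_zero fun t => by
      simp only [φ, AddMonoidHom.mk'_apply, AddCircle.coe_sub, ← hψ m hm, ← hψ₁, sub_self]
    have hμm : μ m ≠ 0 := fun e => hm (hμ (e.trans hμ0.symm))
    have := DFunLike.congr_fun hφ t
    simp only [φ, AddMonoidHom.mk'_apply, AddMonoidHom.zero_apply, sub_eq_zero] at this
    field_simp at this ⊢
    linarith
  refine eq_mul_of_map_add_of_map_mul hadd (fun x y => ?_) y
  rw [hmul x y, show g x = μ x / μ 1 * g 1 by simpa using hmul x 1]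
  ring

lemma eq_one_or_neg_one_of_injective {ψ : 𝕋 → 𝕋} (hψ : Injective ψ) {ρ : ℝ}
    (h : ∀ t : ℝ, ψ t = ↑(ρ * t)) : ρ = 1 ∨ ρ = -1 := by
  have hψ0 : ψ 0 = 0 := by simpa using h 0
  have hker : ∀ t : ℝ, (↑(ρ * t) : 𝕋) = 0 → (t : 𝕋) = 0 := fun t ht =>
    hψ (by rw [h, ht, hψ0])
  obtain ⟨k, hk⟩ := coe_eq_zero_iff_exists_int.1
    (show (ρ : 𝕋) = 0 by rw [← mul_one ρ, ← h, AddCircle.coe_period, hψ0])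
  have hρ : ρ ≠ 0 := fun h0 => coe_half_ne_zero (hker _ (by rw [h0, zero_mul]; rfl))
  obtain ⟨j, hj⟩ := coe_eq_zero_iff_exists_int.1
    (hker (1 / ρ) (by rw [mul_one_div_cancel hρ, AddCircle.coe_period]))
  have hkj : k * j = 1 := by
    exact_mod_cast (show (k : ℝ) * j = 1 by rw [← hk, ← hj, mul_one_div_cancel hρ])
  rcases Int.eq_one_or_neg_one_of_mul_eq_one hkj with rfl | rfl <;> simp [hk]

lemma cylπ_zero : cylπ (0, 0) = 0 := rfl

lemma cylπ_eq_cylπ_iff {x y x' y' : ℝ} :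
    cylπ (x, y) = cylπ (x', y') ↔ (∃ k : ℤ, x' = x + k) ∧ y = y' := by
  simp [cylπ, Prod.ext_iff, coe_eq_coe_iff_exists_int]

lemma cylπ_add_intCast (x y : ℝ) (k : ℤ) : cylπ (x + k, y) = cylπ (x, y) :=
  cylπ_eq_cylπ_iff.2 ⟨⟨-k, by push_cast; ring⟩, rfl⟩

def vertical (θ : 𝕋) : Set Cyl := {p | p.1 = θ}

def horizontal (r : ℝ) : Set Cyl := {p | p.2 = r}

def helix (m c : ℝ) : Set Cyl := cylπ '' {q | q.2 = m * q.1 + c}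

def IsTransversal (X : Set Cyl) : Prop :=
  (∃ θ, X = vertical θ) ∨ ∃ m c, m ≠ 0 ∧ X = helix m c

@[simp] lemma mem_vertical {θ : 𝕋} {p : Cyl} : p ∈ vertical θ ↔ p.1 = θ := Iff.rfl

@[simp] lemma mem_horizontal {r : ℝ} {p : Cyl} : p ∈ horizontal r ↔ p.2 = r := Iff.rfl

lemma vertical_injective : Injective vertical := fun θ θ' h =>
  (h ▸ rfl : ((θ, 0) : Cyl) ∈ vertical θ')

lemma horizontal_injective : Injective horizontal := fun r s h =>
  (h ▸ rfl : ((0, r) : Cyl) ∈ horizontal s)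

lemma mem_helix {m c : ℝ} {p : Cyl} : p ∈ helix m c ↔ ∃ t : ℝ, cylπ (t, m * t + c) = p :=
  ⟨fun ⟨q, hq, h⟩ => ⟨q.1, by rw [← h, ← hq.out]⟩, fun ⟨t, h⟩ => ⟨_, rfl, h⟩⟩

lemma cylπ_mem_helix {m c : ℝ} (t : ℝ) : cylπ (t, m * t + c) ∈ helix m c :=
  mem_helix.2 ⟨t, rfl⟩

lemma zero_mem_helix_zero (m : ℝ) : (0 : Cyl) ∈ helix m 0 := by
  simpa [cylπ_zero] using cylπ_mem_helix (m := m) (c := 0) 0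

lemma mk_mem_helix_iff {m c y : ℝ} {θ : 𝕋} (hm : m ≠ 0) :
    (θ, y) ∈ helix m c ↔ θ = ↑((y - c) / m) := by
  rw [mem_helix]
  constructor
  · rintro ⟨t, ht⟩
    simp only [cylπ, Prod.mk.injEq] at ht
    rw [← ht.1, ← ht.2]
    congr 1
    field_simp
    ring
  · intro h
    refine ⟨(y - c) / m, ?_⟩
    simp only [cylπ, h, Prod.mk.injEq, true_and]
    field_simp
    ring

lemma helix_zero (c : ℝ) : helix 0 c = horizontal c := by
  ext ⟨θ, y⟩
  obtain ⟨x, rfl⟩ := QuotientAddGroup.mk_surjective θ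
  simp only [mem_helix, mem_horizontal, cylπ, zero_mul, zero_add, Prod.mk.injEq]
  exact ⟨fun ⟨_, _, h⟩ => h.symm, fun h => ⟨x, rfl, h.symm⟩⟩

lemma helix_add_mul_intCast (m c : ℝ) (k : ℤ) : helix m (c + m * k) = helix m c := by
  ext p
  simp only [mem_helix]
  constructor
  · rintro ⟨t, rfl⟩
    exact ⟨t + k, by rw [show m * (t + k) + c = m * t + (c + m * k) by ring, cylπ_add_intCast]⟩
  · rintro ⟨t, rfl⟩
    refine ⟨t - k, ?_⟩
    rw [show m * (t - k) + (c + m * k) = m * t + c by ring, ← cylπ_add_intCast (t - k) _ k,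
      sub_add_cancel]

lemma helix_eq_of_inter_nonempty {m c c' : ℝ} (h : (helix m c ∩ helix m c').Nonempty) :
    helix m c = helix m c' := by
  obtain ⟨p, hp, hp'⟩ := h
  obtain ⟨t, rfl⟩ := mem_helix.1 hp
  obtain ⟨s, hs⟩ := mem_helix.1 hp'
  obtain ⟨⟨k, hk⟩, h₂⟩ := cylπ_eq_cylπ_iff.1 hs
  rw [show c' = c + m * k by linear_combination h₂ + m * hk, helix_add_mul_intCast]

lemma slope_eq_of_helix_eq {m m' c c' : ℝ} (h : helix m c = helix m' c') : m = m' := by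
  have key : ∀ t : ℝ, ∃ k : ℤ, (m - m') * t + (c - c') = m' * k := by
    intro t
    obtain ⟨s, hs⟩ := mem_helix.1 (h ▸ cylπ_mem_helix t)
    obtain ⟨⟨k, hk⟩, h₂⟩ := cylπ_eq_cylπ_iff.1 hs
    exact ⟨-k, by push_cast; linear_combination -m' * hk - h₂⟩
  by_contra hne
  -- for this `t` the left-hand side is `m' / 2`, which lies in `m' ℤ` only if `m' = 0`
  obtain ⟨k, hk⟩ := key ((m' / 2 - (c - c')) / (m - m'))
  rw [mul_div_cancel₀ _ (sub_ne_zero.2 hne)] at hk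
  have hm' : m' = 0 := by
    have hk' : m' * (1 - 2 * k) = 0 := by linear_combination 2 * hk
    refine (mul_eq_zero.1 hk').resolve_right fun h2 => ?_
    have : (1 - 2 * k : ℤ) = 0 := by exact_mod_cast h2
    omega
  obtain ⟨k₀, h₀⟩ := key 0
  obtain ⟨k₁, h₁⟩ := key 1
  simp only [hm', zero_mul, sub_zero, mul_zero, zero_add, mul_one] at h₀ h₁
  exact hne (by rw [hm']; linarith)

lemma vertical_inter_vertical {θ θ' : 𝕋} (h : θ ≠ θ') : vertical θ ∩ vertical θ' = ∅ :=
  eq_empty_of_forall_notMem fun _ ⟨h₁, h₂⟩ => h (h₁.symm.trans h₂)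

lemma vertical_nontrivial (θ : 𝕋) : (vertical θ).Nontrivial :=
  ⟨(θ, 0), rfl, (θ, 1), rfl, by simp⟩

lemma not_helix_subset_vertical (m c : ℝ) (θ : 𝕋) : ¬ helix m c ⊆ vertical θ := fun h => by
  have h₀ : ((0 : ℝ) : 𝕋) = θ := h (cylπ_mem_helix (m := m) (c := c) 0)
  have h₁ : ((1 / 2 : ℝ) : 𝕋) = θ := h (cylπ_mem_helix (m := m) (c := c) (1 / 2))
  exact coe_half_ne_zero (h₁.trans h₀.symm)

lemma helix_nontrivial (m c : ℝ) : (helix m c).Nontrivial := by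
  refine ⟨_, cylπ_mem_helix 0, _, cylπ_mem_helix (1 / 2), fun h => coe_half_ne_zero ?_⟩
  exact (congrArg Prod.fst h).symm

lemma vertical_inter_helix_nontrivial (θ : 𝕋) {m : ℝ} (hm : m ≠ 0) (c : ℝ) :
    (vertical θ ∩ helix m c).Nontrivial := by
  obtain ⟨x, rfl⟩ := QuotientAddGroup.mk_surjective θ
  refine ⟨_, ⟨rfl, cylπ_mem_helix x⟩, _, ⟨AddCircle.coe_add_period 1 x, cylπ_mem_helix (x + 1)⟩,
    fun h => hm ?_⟩
  have := congrArg Prod.snd h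
  simp only [cylπ] at this
  linarith

lemma cylπ_mem_helix_inter {m m' : ℝ} (h : m ≠ m') (c c' : ℝ) (k : ℤ) :
    cylπ ((c' - c - m' * k) / (m - m'), m * ((c' - c - m' * k) / (m - m')) + c) ∈
      helix m c ∩ helix m' c' := by
  refine ⟨cylπ_mem_helix _, mem_helix.2 ⟨(c' - c - m' * k) / (m - m') - k, ?_⟩⟩
  rw [← cylπ_add_intCast _ _ k, sub_add_cancel]
  congr 2
  field_simp [sub_ne_zero.2 h]
  ring

lemma helix_inter_helix_nonempty {m m' : ℝ} (h : m ≠ m') (c c' : ℝ) :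
    (helix m c ∩ helix m' c').Nonempty :=
  ⟨_, cylπ_mem_helix_inter h c c' 0⟩

lemma helix_inter_helix_nontrivial {m m' : ℝ} (hm : m ≠ 0) (hm' : m' ≠ 0) (h : m ≠ m')
    (c c' : ℝ) : (helix m c ∩ helix m' c').Nontrivial := by
  refine ⟨_, cylπ_mem_helix_inter h c c' 0, _, cylπ_mem_helix_inter h c c' 1, fun e => ?_⟩
  have := congrArg Prod.snd e
  simp only [cylπ, Int.cast_zero, Int.cast_one, mul_zero, mul_one, add_left_inj] at this
  have := mul_left_cancel₀ hm this
  field_simp [sub_ne_zero.2 h] at this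
  exact hm' (by linarith)

lemma isTransversal_vertical (θ : 𝕋) : IsTransversal (vertical θ) := Or.inl ⟨θ, rfl⟩

lemma isTransversal_helix {m : ℝ} (hm : m ≠ 0) (c : ℝ) : IsTransversal (helix m c) :=
  Or.inr ⟨m, c, hm, rfl⟩

lemma IsTransversal.exists_inter_horizontal_eq_singleton {X : Set Cyl} (hX : IsTransversal X)
    (r : ℝ) : ∃ p, X ∩ horizontal r = {p} := by
  rcases hX with ⟨θ, rfl⟩ | ⟨m, c, hm, rfl⟩
  · exact ⟨(θ, r), by ext ⟨θ', y⟩; simp⟩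
  · refine ⟨(↑((r - c) / m), r), ?_⟩
    ext ⟨θ, y⟩
    simp only [mem_inter_iff, mk_mem_helix_iff hm, mem_horizontal, mem_singleton_iff,
      Prod.mk.injEq]
    constructor <;> rintro ⟨h, rfl⟩ <;> exact ⟨h, rfl⟩

lemma IsTransversal.inter_eq_empty_or_nontrivial {X Y : Set Cyl} (hX : IsTransversal X)
    (hY : IsTransversal Y) : X ∩ Y = ∅ ∨ (X ∩ Y).Nontrivial := by
  rcases hX with ⟨θ, rfl⟩ | ⟨m, c, hm, rfl⟩ <;> rcases hY with ⟨θ', rfl⟩ | ⟨m', c', hm', rfl⟩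
  · rcases eq_or_ne θ θ' with rfl | h
    · exact Or.inr (by rw [inter_self]; exact vertical_nontrivial θ)
    · exact Or.inl (vertical_inter_vertical h)
  · exact Or.inr (vertical_inter_helix_nontrivial θ hm' c')
  · exact Or.inr (by rw [inter_comm]; exact vertical_inter_helix_nontrivial θ' hm c)
  · rcases eq_or_ne m m' with rfl | h
    · by_cases hne : (helix m c ∩ helix m c').Nonempty
      · rw [helix_eq_of_inter_nonempty hne, inter_self]
        exact Or.inr (helix_nontrivial m c')
      · exact Or.inl (not_nonempty_iff_eq_empty.1 hne)
    · exact Or.inr (helix_inter_helix_nontrivial hm hm' h c c')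

lemma setOf_line_eq_of_fst_eq_zero {p v : ℝ × ℝ} (h₁ : v.1 = 0) (h₂ : v.2 ≠ 0) :
    {x | ∃ t : ℝ, x = p + t • v} = {q | q.1 = p.1} := by
  ext q
  simp only [mem_ofPred_eq, Prod.ext_iff, Prod.fst_add, Prod.snd_add, Prod.smul_fst,
    Prod.smul_snd, smul_eq_mul, h₁, mul_zero, add_zero]
  exact ⟨fun ⟨_, h, _⟩ => h, fun h => ⟨(q.2 - p.2) / v.2, h, by field_simp; ring⟩⟩

lemma setOf_line_eq_of_fst_ne_zero {p v : ℝ × ℝ} (h : v.1 ≠ 0) :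
    {x | ∃ t : ℝ, x = p + t • v} = {q | q.2 = v.2 / v.1 * q.1 + (p.2 - v.2 / v.1 * p.1)} := by
  ext q
  simp only [mem_ofPred_eq, Prod.ext_iff, Prod.fst_add, Prod.snd_add, Prod.smul_fst,
    Prod.smul_snd, smul_eq_mul]
  constructor
  · rintro ⟨t, h₁, h₂⟩
    rw [h₁, h₂]
    field_simp
    ring
  · intro hq
    refine ⟨(q.1 - p.1) / v.1, by field_simp; ring, ?_⟩
    rw [hq]
    field_simp
    ring

lemma vertical_coe (x : ℝ) : vertical (x : 𝕋) = cylπ '' {q | q.1 = x} := by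
  ext ⟨θ, y⟩
  constructor
  · intro h
    exact ⟨(x, y), rfl, by rw [show θ = x from h]; rfl⟩
  · rintro ⟨q, rfl, h⟩
    exact (congrArg Prod.fst h).symm

lemma isCylGeodesic_vertical (θ : 𝕋) : IsCylGeodesic (vertical θ) := by
  obtain ⟨x, rfl⟩ := QuotientAddGroup.mk_surjective θ
  exact ⟨_, ⟨(x, 0), (0, 1), by simp, rfl⟩, by
    rw [setOf_line_eq_of_fst_eq_zero rfl one_ne_zero, vertical_coe]⟩

lemma isCylGeodesic_helix (m c : ℝ) : IsCylGeodesic (helix m c) :=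
  ⟨_, ⟨(0, c), (1, m), by simp, rfl⟩, by
    rw [setOf_line_eq_of_fst_ne_zero one_ne_zero]; simp [helix]⟩

lemma isCylGeodesic_horizontal (r : ℝ) : IsCylGeodesic (horizontal r) :=
  helix_zero r ▸ isCylGeodesic_helix 0 r

lemma IsTransversal.isCylGeodesic {X : Set Cyl} (hX : IsTransversal X) : IsCylGeodesic X := by
  rcases hX with ⟨θ, rfl⟩ | ⟨m, c, -, rfl⟩
  exacts [isCylGeodesic_vertical θ, isCylGeodesic_helix m c]

lemma _root_.IsCylGeodesic.eq_vertical_or_eq_helix {G : Set Cyl} (hG : IsCylGeodesic G) :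
    (∃ θ, G = vertical θ) ∨ ∃ m c, G = helix m c := by
  obtain ⟨_, ⟨p, v, hv, rfl⟩, rfl⟩ := hG
  rcases eq_or_ne v.1 0 with h₁ | h₁
  · have h₂ : v.2 ≠ 0 := fun h₂ => hv (Prod.ext h₁ h₂)
    exact Or.inl ⟨p.1, by rw [setOf_line_eq_of_fst_eq_zero h₁ h₂, vertical_coe]⟩
  · exact Or.inr ⟨_, _, by rw [setOf_line_eq_of_fst_ne_zero h₁]; rfl⟩

lemma _root_.IsCylGeodesic.eq_horizontal_or_isTransversal {G : Set Cyl} (hG : IsCylGeodesic G) :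
    (∃ r, G = horizontal r) ∨ IsTransversal G := by
  rcases hG.eq_vertical_or_eq_helix with ⟨θ, rfl⟩ | ⟨m, c, rfl⟩
  · exact Or.inr (isTransversal_vertical θ)
  · rcases eq_or_ne m 0 with rfl | hm
    · exact Or.inl ⟨c, helix_zero c⟩
    · exact Or.inr (isTransversal_helix hm c)

lemma _root_.IsCylGeodesic.eq_vertical_of_subset {G : Set Cyl} (hG : IsCylGeodesic G) {θ : 𝕋}
    (h : G ⊆ vertical θ) : G = vertical θ := by
  rcases hG.eq_vertical_or_eq_helix with ⟨θ', rfl⟩ | ⟨m, c, rfl⟩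
  · rw [show θ' = θ from h (show ((θ', 0) : Cyl) ∈ vertical θ' from rfl)]
  · exact absurd h (not_helix_subset_vertical m c θ)

lemma _root_.IsCylGeodesic.eq_horizontal_of_inter_eq_singleton {X Y : Set Cyl}
    (hY : IsCylGeodesic Y) (hX : IsTransversal X) {p : Cyl} (h : Y ∩ X = {p}) :
    ∃ s, Y = horizontal s := by
  refine hY.eq_horizontal_or_isTransversal.resolve_right fun hY' => ?_
  rcases hY'.inter_eq_empty_or_nontrivial hX with h' | h' <;> rw [h] at h'
  exacts [singleton_ne_empty p h', not_nontrivial_singleton h']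

def IsGeodesicPreserving (f : Cyl → Cyl) : Prop :=
  ∀ G : Set Cyl, IsCylGeodesic G → IsCylGeodesic (f '' G)

lemma IsGeodesicPreserving.comp {f g : Cyl → Cyl} (hg : IsGeodesicPreserving g)
    (hf : IsGeodesicPreserving f) : IsGeodesicPreserving (g ∘ f) := fun G hG => by
  rw [image_comp]
  exact hg _ (hf G hG)

noncomputable def shearShift (α x₀ b : ℝ) : Cyl ≃ Cyl where
  toFun p := (p.1 + ↑(α * p.2 + x₀), p.2 + b)
  invFun p := (p.1 - ↑(α * (p.2 - b) + x₀), p.2 - b)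
  left_inv p := by simp
  right_inv p := by simp

lemma shearShift_cylπ (α x₀ b : ℝ) (q : ℝ × ℝ) :
    shearShift α x₀ b (cylπ q) = cylπ (q.1 + α * q.2 + x₀, q.2 + b) := by
  simp [shearShift, cylπ, add_assoc]

lemma shearShift_symm_cylπ (α x₀ b : ℝ) (q : ℝ × ℝ) :
    (shearShift α x₀ b).symm (cylπ q) = cylπ (q.1 - α * (q.2 - b) - x₀, q.2 - b) := by
  simp [shearShift, cylπ, sub_sub]

lemma isGeodesicPreserving_shearShift (α x₀ b : ℝ) :
    IsGeodesicPreserving (shearShift α x₀ b) := by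
  rintro _ ⟨_, ⟨p, v, hv, rfl⟩, rfl⟩
  set E : ℝ × ℝ → ℝ × ℝ := fun q => (q.1 + α * q.2 + x₀, q.2 + b)
  have hE : ∀ t : ℝ, E (p + t • v) = E p + t • (v.1 + α * v.2, v.2) := fun t => by
    ext <;> simp [E] <;> ring
  rw [← image_comp, show shearShift α x₀ b ∘ cylπ = cylπ ∘ E from
    funext (shearShift_cylπ α x₀ b), image_comp]
  refine ⟨_, ⟨E p, (v.1 + α * v.2, v.2), fun h => hv ?_, ?_⟩, rfl⟩
  · have h₂ : v.2 = 0 := congrArg Prod.snd h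
    have h₁ : v.1 + α * v.2 = 0 := congrArg Prod.fst h
    exact Prod.ext (by simpa [h₂] using h₁) h₂
  · ext z
    constructor
    · rintro ⟨_, ⟨t, rfl⟩, rfl⟩
      exact ⟨t, hE t⟩
    · rintro ⟨t, rfl⟩
      exact ⟨p + t • v, ⟨t, rfl⟩, hE t⟩

lemma IsTransversal.exists_shearShift {X : Set Cyl} (hX : IsTransversal X) {p : Cyl}
    (hp : p ∈ X) : ∃ α x₀ b, shearShift α x₀ b '' X = vertical 0 ∧ shearShift α x₀ b p = 0 := by
  suffices ∃ α x₀ : ℝ, ∀ q ∈ X, q.1 + ↑(α * q.2 + x₀) = (0 : 𝕋) by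
    obtain ⟨α, x₀, h⟩ := this
    refine ⟨α, x₀, -p.2, ?_, Prod.ext (h p hp) (add_neg_cancel p.2)⟩
    exact (isGeodesicPreserving_shearShift α x₀ _ X hX.isCylGeodesic).eq_vertical_of_subset
      (image_subset_iff.2 h)
  rcases hX with ⟨θ, rfl⟩ | ⟨m, c, hm, rfl⟩
  · obtain ⟨x, rfl⟩ := QuotientAddGroup.mk_surjective θ
    refine ⟨0, -x, fun q hq => ?_⟩
    rw [show q.1 = x from hq, zero_mul, zero_add, ← AddCircle.coe_add, add_neg_cancel]
    rfl
  · refine ⟨-1 / m, c / m, fun q hq => ?_⟩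
    obtain ⟨t, rfl⟩ := mem_helix.1 hq
    show ((t + (-1 / m * (m * t + c) + c / m) : ℝ) : 𝕋) = 0
    rw [show t + (-1 / m * (m * t + c) + c / m) = 0 by field_simp; ring]
    rfl

lemma coe_eq_of_forall_mk_mem_helix {ψ : 𝕋 → 𝕋} {g : ℝ → ℝ} {m c M C : ℝ} (hψ0 : ψ 0 = 0)
    (hM : M ≠ 0) (h : ∀ t : ℝ, (ψ t, g (m * t + c)) ∈ helix M C) (t : ℝ) :
    ψ t = ↑((g (m * t + c) - g c) / M) := by
  have h₀ := (mk_mem_helix_iff hM).1 (h 0)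
  simp only [QuotientAddGroup.mk_zero, hψ0, mul_zero, zero_add] at h₀
  rw [(mk_mem_helix_iff hM).1 (h t),
    show (g (m * t + c) - g c) / M = (g (m * t + c) - C) / M - (g c - C) / M by ring,
    AddCircle.coe_sub, ← h₀, sub_zero]

section GeodesicPreserving

variable {f : Cyl → Cyl} (hf : Injective f) (hgp : IsGeodesicPreserving f)
include hf hgp

lemma exists_image_horizontal_eq (r : ℝ) : ∃ s, f '' horizontal r = horizontal s := by
  refine (hgp _ (isCylGeodesic_horizontal r)).eq_horizontal_or_isTransversal.resolve_right
    fun hX => ?_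
  -- `helix 1 0` and `helix 2 0` meet `horizontal r` once, so their images are horizontal;
  -- as both contain `f 0`, they coincide
  have key : ∀ m ≠ 0, ∃ s, f '' helix m 0 = horizontal s := fun m hm => by
    obtain ⟨p, hp⟩ := (isTransversal_helix hm 0).exists_inter_horizontal_eq_singleton r
    exact (hgp _ (isCylGeodesic_helix m 0)).eq_horizontal_of_inter_eq_singleton hX
      (by rw [← image_inter hf, hp, image_singleton])
  obtain ⟨s₁, h₁⟩ := key 1 one_ne_zero
  obtain ⟨s₂, h₂⟩ := key 2 two_ne_zero
  have hs : s₁ = s₂ := by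
    have e₁ : f 0 ∈ horizontal s₁ := h₁ ▸ mem_image_of_mem f (zero_mem_helix_zero 1)
    have e₂ : f 0 ∈ horizontal s₂ := h₂ ▸ mem_image_of_mem f (zero_mem_helix_zero 2)
    exact e₁.symm.trans e₂
  have := slope_eq_of_helix_eq (hf.image_injective (h₁.trans (hs ▸ h₂.symm)))
  norm_num at this

lemma exists_horizontal_map :
    ∃ g : ℝ → ℝ, Injective g ∧ ∀ r, f '' horizontal r = horizontal (g r) := by
  choose g hg using exists_image_horizontal_eq hf hgp
  exact ⟨g, fun r s e => horizontal_injective (hf.image_injective (by rw [hg, hg, e])), hg⟩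

lemma IsTransversal.image {X : Set Cyl} (hX : IsTransversal X) : IsTransversal (f '' X) := by
  obtain ⟨g, hg, hfg⟩ := exists_horizontal_map hf hgp
  refine (hgp X hX.isCylGeodesic).eq_horizontal_or_isTransversal.resolve_left ?_
  rintro ⟨s, hs⟩
  have : ∀ r, g r = s := fun r => by
    obtain ⟨p, hp⟩ := hX.exists_inter_horizontal_eq_singleton r
    have := mem_image_of_mem f (hp.symm ▸ mem_singleton p : p ∈ X ∩ horizontal r)
    rw [image_inter hf, hs, hfg] at this
    exact this.2.symm.trans this.1
  exact zero_ne_one (hg ((this 0).trans (this 1).symm))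

variable (hV : f '' vertical 0 = vertical 0)
include hV

lemma exists_vertical_map :
    ∃ ψ : 𝕋 → 𝕋, Injective ψ ∧ ∀ θ, f '' vertical θ = vertical (ψ θ) := by
  have h : ∀ θ, ∃ θ', f '' vertical θ = vertical θ' := by
    intro θ
    rcases eq_or_ne θ 0 with rfl | hθ
    · exact ⟨0, hV⟩
    rcases (isTransversal_vertical θ).image hf hgp with h | ⟨m, c, hm, h⟩
    · exact h
    -- disjoint verticals have disjoint images, but every helix meets `vertical 0`
    have := image_inter hf (s := vertical 0) (t := vertical θ)
    rw [vertical_inter_vertical hθ.symm, image_empty, hV, h] at this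
    exact absurd this.symm (vertical_inter_helix_nontrivial 0 hm c).nonempty.ne_empty
  choose ψ hψ using h
  exact ⟨ψ, fun θ θ' e => vertical_injective (hf.image_injective (by rw [hψ, hψ, e])), hψ⟩

lemma exists_image_helix_eq (m c : ℝ) : ∃ M C, f '' helix m c = helix M C := by
  rcases eq_or_ne m 0 with rfl | hm
  · obtain ⟨s, hs⟩ := exists_image_horizontal_eq hf hgp c
    exact ⟨0, s, by rw [helix_zero, hs, helix_zero]⟩
  rcases (isTransversal_helix hm c).image hf hgp with ⟨θ', h⟩ | ⟨M, C, -, h⟩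
  · -- the helix meets every vertical, so `ψ` would be constant
    obtain ⟨ψ, hψ, hfψ⟩ := exists_vertical_map hf hgp hV
    have : ∀ θ, ψ θ = θ' := fun θ => by
      obtain ⟨p, hp⟩ := (vertical_inter_helix_nontrivial θ hm c).nonempty
      have := mem_image_of_mem f hp
      rw [image_inter hf, hfψ, h] at this
      exact this.1.symm.trans this.2
    exact absurd (hψ ((this 0).trans (this _).symm)) coe_half_ne_zero.symm
  · exact ⟨M, C, h⟩

lemma exists_slope_map (h0 : f 0 = 0) :
    ∃ μ : ℝ → ℝ, Injective μ ∧ μ 0 = 0 ∧ ∀ m c, ∃ C, f '' helix m c = helix (μ m) C := by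
  choose M C hMC using exists_image_helix_eq hf hgp hV
  have hf0 : ∀ m, (0 : Cyl) ∈ helix (M m 0) (C m 0) := fun m => by
    rw [← hMC, ← h0]
    exact mem_image_of_mem f (zero_mem_helix_zero m)
  refine ⟨fun m => M m 0, fun m m' e => ?_, ?_, fun m c => ?_⟩
  · replace e : M m 0 = M m' 0 := e
    refine slope_eq_of_helix_eq (c := 0) (c' := 0) (hf.image_injective ?_)
    rw [hMC, hMC, e, helix_eq_of_inter_nonempty ⟨0, e ▸ hf0 m, hf0 m'⟩]
  · obtain ⟨s, hs⟩ := exists_image_horizontal_eq hf hgp 0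
    exact slope_eq_of_helix_eq ((hMC 0 0).symm.trans
      (by rw [helix_zero, hs, helix_zero] : f '' helix 0 0 = helix 0 s))
  -- helices of equal slope are equal or disjoint, while helices of distinct slopes meet
  · by_cases hne : (helix m c ∩ helix m 0).Nonempty
    · exact ⟨C m 0, by rw [helix_eq_of_inter_nonempty hne, hMC]⟩
    refine ⟨C m c, ?_⟩
    rw [hMC]
    congr 1
    by_contra hM
    obtain ⟨q, hq⟩ := helix_inter_helix_nonempty hM (C m c) (C m 0)
    rw [← hMC, ← hMC, ← image_inter hf] at hq
    exact hne (image_nonempty.1 ⟨q, hq⟩)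

theorem exists_eq_cylπ_mul_of_normalized (h0 : f 0 = 0) :
    ∃ σ a : ℝ, (σ = 1 ∨ σ = -1) ∧ a ≠ 0 ∧ ∀ x y : ℝ, f (cylπ (x, y)) = cylπ (σ * x, a * y) := by
  obtain ⟨g, hg, hfg⟩ := exists_horizontal_map hf hgp
  obtain ⟨ψ, hψ, hfψ⟩ := exists_vertical_map hf hgp hV
  have hf_eq : ∀ p, f p = (ψ p.1, g p.2) := fun p => by
    have h₁ : f p ∈ f '' vertical p.1 := mem_image_of_mem f rfl
    have h₂ : f p ∈ f '' horizontal p.2 := mem_image_of_mem f rfl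
    rw [hfψ] at h₁
    rw [hfg] at h₂
    exact Prod.ext h₁ h₂
  have hψ0 : ψ 0 = 0 := congrArg Prod.fst ((hf_eq 0).symm.trans h0)
  have hg0 : g 0 = 0 := congrArg Prod.snd ((hf_eq 0).symm.trans h0)
  obtain ⟨μ, hμ, hμ0, hfμ⟩ := exists_slope_map hf hgp hV h0
  have hψg : ∀ m ≠ 0, ∀ c t : ℝ, ψ t = ↑((g (m * t + c) - g c) / μ m) := by
    intro m hm c t
    obtain ⟨C, hC⟩ := hfμ m c
    have hμm : μ m ≠ 0 := fun e => hm (hμ (e.trans hμ0.symm))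
    refine coe_eq_of_forall_mk_mem_helix (C := C) hψ0 hμm (fun s => ?_) t
    have := mem_image_of_mem f (cylπ_mem_helix (m := m) (c := c) s)
    rwa [hC, hf_eq] at this
  have hlin := eq_mul_of_forall_coe_div hg0 hμ hμ0 hψg
  have hψρ : ∀ t : ℝ, ψ t = ↑(g 1 / μ 1 * t) := fun t => by
    rw [hψg 1 one_ne_zero 0 t, one_mul, add_zero, hg0, sub_zero, hlin, mul_div_right_comm]
  refine ⟨g 1 / μ 1, g 1, eq_one_or_neg_one_of_injective hψ hψρ,
    fun e => one_ne_zero (hg (e.trans hg0.symm)), fun x y => ?_⟩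
  rw [hf_eq]
  exact Prod.ext (hψρ x) (hlin y)

end GeodesicPreserving

end Cyl

open Cyl in
theorem cylinder_geodesic_preserving_classification (f : Cyl → Cyl)
    (hbij : Function.Bijective f)
    (hgeo : ∀ G : Set Cyl, IsCylGeodesic G → IsCylGeodesic (f '' G)) :
    ∃ (σ x₀ α a b : ℝ), (σ = 1 ∨ σ = -1) ∧ a ≠ 0 ∧
      ∀ x y : ℝ, f (cylπ (x, y)) = cylπ (σ * x + α * y + x₀, a * y + b) := by
  have hgp : IsGeodesicPreserving f := hgeo
  obtain ⟨α, x₀, b, hS, hS0⟩ := ((isTransversal_vertical 0).image hbij.1 hgp).exists_shearShift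
    (Set.mem_image_of_mem f (show (0 : Cyl) ∈ vertical 0 from rfl))
  set S := shearShift α x₀ b
  obtain ⟨σ, a, hσ, ha, hSf⟩ := exists_eq_cylπ_mul_of_normalized (f := S ∘ f)
    (S.injective.comp hbij.1) ((isGeodesicPreserving_shearShift α x₀ b).comp hgp)
    (by rw [Set.image_comp, hS]) hS0
  refine ⟨σ, α * b - x₀, -(α * a), a, -b, hσ, ha, fun x y => ?_⟩
  rw [← S.symm_apply_apply (f _), ← Function.comp_apply (f := S), hSf, shearShift_symm_cylπ]
  congr 1
  ext <;> dsimp only <;> ring
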